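/- If the determinisation ARS Det(𝒜) = (Dist(A), ↠) of a PARS 𝒜 is confluent, then 𝒜 has unique terminal distributions: for any element a and any two maximal finite computation trees T₁, T₂ rooted at a, supp(T₁) ≈ supp(T₂). -/

import Mathlib

open Relation
open scoped NNReal

abbrev PDist (A : Type) := List (ℝ≥0 × A)

namespace PPARS

variable {A X : Type}

/-- Total weight of a list distribution. -/
def weight (D : PDist A) : ℝ≥0 := (D.map Prod.fst).sum

/-- Scale every weight of a distribution by `α`. -/
def scale (α : ℝ≥0) (D : PDist A) : PDist A := D.map (fun pa => (α * pa.1, pa.2))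

open Classical in
/-- Total weight that `D` assigns to the element `a`. -/
noncomputable def wt (D : PDist A) (a : A) : ℝ≥0 :=
  (D.map (fun pa => if pa.2 = a then pa.1 else 0)).sum

/-- The Flip rule, closed under list contexts. -/
inductive FlipS : PDist A → PDist A → Prop
  | mk (E₁ E₂ : PDist A) (p q : ℝ≥0) (a b : A) :
      FlipS (E₁ ++ [(p,a),(q,b)] ++ E₂) (E₁ ++ [(q,b),(p,a)] ++ E₂)

/-- The Join rule, closed under list contexts. -/
inductive JoinS : PDist A → PDist A → Prop
  | mk (E₁ E₂ : PDist A) (p q : ℝ≥0) (a : A) :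
      JoinS (E₁ ++ [(p,a),(q,a)] ++ E₂) (E₁ ++ [(p+q,a)] ++ E₂)

/-- The Split rule, closed under list contexts. -/
inductive SplitS : PDist A → PDist A → Prop
  | mk (E₁ E₂ : PDist A) (p q : ℝ≥0) (a : A) :
      SplitS (E₁ ++ [(p+q,a)] ++ E₂) (E₁ ++ [(p,a),(q,a)] ++ E₂)

/-- One `∼`-step: congruence closure of Flip, Join and Split. -/
def SimStep (D E : PDist A) : Prop := FlipS D E ∨ JoinS D E ∨ SplitS D E

/-- One Flip-or-Join step. -/
def FJ (D E : PDist A) : Prop := FlipS D E ∨ JoinS D E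

/-- Distribution equivalence `≈`. -/
def DEquiv : PDist A → PDist A → Prop := ReflTransGen SimStep

/-- Parallel evolution `⇒_P` for a PARS relation `R`. -/
inductive PEvol (R : A → PDist A → Prop) : PDist A → PDist A → Prop
  | nil : PEvol R [] []
  | keep {ds ds' : PDist A} (p : ℝ≥0) (a : A) :
      PEvol R ds ds' → PEvol R ((p,a) :: ds) ((p,a) :: ds')
  | evolve {a : A} {D ds ds' : PDist A} (p : ℝ≥0) :
      R a D → PEvol R ds ds' → PEvol R ((p,a) :: ds) (scale p D ++ ds')

/-- Proper parallel evolution `⇒_P¹`: at least one element evolves. -/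
inductive PEvol1 (R : A → PDist A → Prop) : PDist A → PDist A → Prop
  | evolve {a : A} {D ds ds' : PDist A} (p : ℝ≥0) :
      R a D → PEvol R ds ds' → PEvol1 R ((p,a) :: ds) (scale p D ++ ds')
  | keep {ds ds' : PDist A} (p : ℝ≥0) (a : A) :
      PEvol1 R ds ds' → PEvol1 R ((p,a) :: ds) ((p,a) :: ds')

/-- The determinisation relation `↠ = ⇒_P ∪ ≈`. -/
def Red (R : A → PDist A → Prop) (D E : PDist A) : Prop := PEvol R D E ∨ DEquiv D E

/-- `R` defines a PARS: successor distributions are normalised. -/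
def IsPARS (R : A → PDist A → Prop) : Prop := ∀ a D, R a D → weight D = 1

/-- A terminal element has no successor distribution. -/
def Terminal (R : A → PDist A → Prop) (a : A) : Prop := ∀ D, ¬ R a D

/-- A terminal distribution contains only terminal elements. -/
def TerminalD (R : A → PDist A → Prop) (D : PDist A) : Prop := ∀ pa ∈ D, Terminal R pa.2

/-- Classical confluence of a relation. -/
def Confluent (r : X → X → Prop) : Prop :=
  ∀ a b c, ReflTransGen r a b → ReflTransGen r a c →
    ∃ d, ReflTransGen r b d ∧ ReflTransGen r c d

/-- Raw (finite) computation trees. -/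
inductive CTree (A : Type) where
  | leaf (a : A)
  | node (a : A) (cs : List (ℝ≥0 × CTree A))

def CTree.root : CTree A → A
  | .leaf a => a
  | .node a _ => a

/-- `IsTree R t a`: `t` is a computation tree of the PARS `R` with root `a`. -/
inductive IsTree (R : A → PDist A → Prop) : CTree A → A → Prop
  | leaf (a : A) : IsTree R (.leaf a) a
  | node (a : A) (cs : List (ℝ≥0 × CTree A)) :
      R a (cs.map fun x => (x.1, x.2.root)) →
      (∀ x ∈ cs, IsTree R x.2 x.2.root) →
      IsTree R (.node a cs) a

mutual
/-- Support of a computation tree. -/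
def supp : CTree A → PDist A
  | .leaf a => [(1, a)]
  | .node _ cs => suppL cs
def suppL : List (ℝ≥0 × CTree A) → PDist A
  | [] => []
  | (p, t) :: ts => scale p (supp t) ++ suppL ts
end

/-- A tree is maximal when all its leaves are terminal elements. -/
inductive MaximalT (R : A → PDist A → Prop) : CTree A → Prop
  | leaf (a : A) : Terminal R a → MaximalT R (.leaf a)
  | node (a : A) (cs : List (ℝ≥0 × CTree A)) :
      (∀ x ∈ cs, MaximalT R x.2) → MaximalT R (.node a cs)

end PPARS

/-!
Unfolding a computation tree node by node is a `⇒_P`-reduction from `[(1, a)]` to its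
support, so confluence gives a common reduct `D` of the two supports. A maximal tree has a
terminal support, and terminality is preserved by `≈`, so every `⇒_P` step on the way to
`D` is the identity: both supports are `≈ D`, and `≈` is symmetric.
-/

namespace PPARS

variable {A : Type} {R : A → PDist A → Prop}

@[simp]
lemma scale_one (D : PDist A) : scale 1 D = D := by
  simp [scale]

lemma scale_append (p : ℝ≥0) (D E : PDist A) :
    scale p (D ++ E) = scale p D ++ scale p E := List.map_append

lemma scale_scale (p q : ℝ≥0) (D : PDist A) :
    scale p (scale q D) = scale (p * q) D := by
  simp [scale, Function.comp_def, mul_assoc]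

lemma PEvol.refl (D : PDist A) : PEvol R D D := by
  induction D with
  | nil => exact .nil
  | cons pa ds ih => exact .keep pa.1 pa.2 ih

lemma PEvol.append {D D' E E' : PDist A} (h₁ : PEvol R D D') (h₂ : PEvol R E E') :
    PEvol R (D ++ E) (D' ++ E') := by
  induction h₁ with
  | nil => exact h₂
  | keep p a _ ih => exact .keep p a ih
  | evolve p hr _ ih =>
      rw [List.append_assoc]
      exact .evolve p hr ih

lemma PEvol.scale {D E : PDist A} (h : PEvol R D E) (p : ℝ≥0) :
    PEvol R (scale p D) (scale p E) := by
  induction h with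
  | nil => exact .nil
  | keep q a _ ih => exact .keep (p * q) a ih
  | evolve q hr _ ih =>
      rw [scale_append, scale_scale]
      exact .evolve (p * q) hr ih

lemma reflTransGen_pevol_append {D D' E E' : PDist A}
    (h₁ : ReflTransGen (PEvol R) D D') (h₂ : ReflTransGen (PEvol R) E E') :
    ReflTransGen (PEvol R) (D ++ E) (D' ++ E') :=
  (h₁.lift (· ++ E) fun _ _ h => h.append (.refl E)).trans
    (h₂.lift (D' ++ ·) fun _ _ h => (PEvol.refl D').append h)

lemma reflTransGen_pevol_suppL (cs : List (ℝ≥0 × CTree A))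
    (hcs : ∀ x ∈ cs, ReflTransGen (PEvol R) [(1, x.2.root)] (supp x.2)) :
    ReflTransGen (PEvol R) (cs.map fun x => (x.1, x.2.root)) (suppL cs) := by
  induction cs with
  | nil => exact .refl
  | cons c cs ih =>
      have hc : ReflTransGen (PEvol R) [(c.1, c.2.root)] (scale c.1 (supp c.2)) := by
        simpa [Function.onFun, PPARS.scale] using
          (hcs c List.mem_cons_self).lift (scale c.1) fun _ _ h => h.scale c.1
      exact reflTransGen_pevol_append (D := [_]) hc
        (ih fun x hx => hcs x (List.mem_cons_of_mem c hx))

lemma IsTree.reflTransGen_pevol_supp {T : CTree A} {b : A} (h : IsTree R T b) :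
    ReflTransGen (PEvol R) [(1, b)] (supp T) := by
  induction h with
  | leaf a => exact .refl
  | node a cs hr _ ih =>
      have hstep : PEvol R [(1, a)] (cs.map fun x => (x.1, x.2.root)) := by
        simpa using PEvol.evolve (ds := []) 1 hr .nil
      exact .head hstep (reflTransGen_pevol_suppL cs ih)

lemma terminalD_suppL {cs : List (ℝ≥0 × CTree A)}
    (h : ∀ x ∈ cs, TerminalD R (supp x.2)) : TerminalD R (suppL cs) := by
  induction cs with
  | nil => simp [suppL, TerminalD]
  | cons c cs ih =>
      intro pa hpa
      rcases List.mem_append.1 hpa with hm | hm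
      · obtain ⟨qa, hqa, rfl⟩ := List.mem_map.1 hm
        exact h c List.mem_cons_self qa hqa
      · exact ih (fun x hx => h x (List.mem_cons_of_mem c hx)) pa hm

lemma MaximalT.terminalD_supp {T : CTree A} (m : MaximalT R T) : TerminalD R (supp T) := by
  induction m with
  | leaf a ht => simpa [supp, TerminalD] using ht
  | node a cs _ ih => exact terminalD_suppL ih

lemma PEvol.eq_of_terminalD {D E : PDist A} (h : PEvol R D E) (hD : TerminalD R D) :
    E = D := by
  induction h with
  | nil => rfl
  | keep p a _ ih => rw [ih fun pa hpa => hD pa (List.mem_cons_of_mem _ hpa)]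
  | evolve p hr _ _ => exact absurd hr (hD _ List.mem_cons_self _)

lemma SimStep.map_snd_subset {D E : PDist A} (h : SimStep D E) :
    E.map Prod.snd ⊆ D.map Prod.snd := by
  rcases h with ⟨E₁, E₂, p, q, a, b⟩ | ⟨E₁, E₂, p, q, a⟩ | ⟨E₁, E₂, p, q, a⟩ <;>
    (intro x; simp only [List.map_append, List.map_cons, List.map_nil, List.mem_append,
      List.mem_cons, List.not_mem_nil]; tauto)

lemma TerminalD.of_dequiv {D E : PDist A} (hD : TerminalD R D) (h : DEquiv D E) :
    TerminalD R E := by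
  induction h with
  | refl => exact hD
  | tail _ hs ih =>
      intro pa hpa
      obtain ⟨qb, hqb, hsnd⟩ := List.mem_map.1 (hs.map_snd_subset (List.mem_map_of_mem hpa))
      exact hsnd ▸ ih qb hqb

instance : Std.Symm (@SimStep A) where
  symm _ _ := by
    rintro (⟨E₁, E₂, p, q, a, b⟩ | ⟨E₁, E₂, p, q, a⟩ | ⟨E₁, E₂, p, q, a⟩)
    · exact .inl (.mk E₁ E₂ q p b a)
    · exact .inr (.inr (.mk E₁ E₂ p q a))
    · exact .inr (.inl (.mk E₁ E₂ p q a))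

lemma DEquiv.symm {D E : PDist A} (h : DEquiv D E) : DEquiv E D :=
  Std.Symm.symm (r := ReflTransGen SimStep) _ _ h

lemma TerminalD.dequiv_of_reflTransGen_red {D E : PDist A} (hD : TerminalD R D)
    (h : ReflTransGen (Red R) D E) : DEquiv D E := by
  induction h with
  | refl => exact .refl
  | tail _ hs ih =>
      rcases hs with hs | hs
      · rwa [hs.eq_of_terminalD (hD.of_dequiv ih)]
      · exact ih.trans hs

end PPARS

open PPARS Relation in
/-- If the determinisation of a PARS is confluent, the PARS has unique terminal
distributions: supports of maximal finite trees with a common root are equivalent. -/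
theorem cr_implies_utd {A : Type} (R : A → PDist A → Prop) (hR : IsPARS R)
    (hconf : Confluent (Red R)) {a : A} {T₁ T₂ : CTree A}
    (h₁ : IsTree R T₁ a) (h₂ : IsTree R T₂ a)
    (m₁ : MaximalT R T₁) (m₂ : MaximalT R T₂) :
    DEquiv (supp T₁) (supp T₂) := by
  have red : ∀ {T}, IsTree R T a → ReflTransGen (Red R) [(1, a)] (supp T) :=
    fun h => ReflTransGen.mono (fun _ _ => Or.inl) _ _ h.reflTransGen_pevol_supp
  obtain ⟨D, hD₁, hD₂⟩ := hconf _ _ _ (red h₁) (red h₂)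
  exact (m₁.terminalD_supp.dequiv_of_reflTransGen_red hD₁).trans
    (m₂.terminalD_supp.dequiv_of_reflTransGen_red hD₂).symm
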